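/- Let A be a complex Banach algebra with unit and sub-multiplicative norm, let X, Y ∈ A, let (C_j)_{j≥2} be any sequence in A, and let λ ≥ 0. For n ≥ 2 define the truncated symmetric product Ψₙ(λ) = e^{λX/2} e^{λY/2} e^{λ²C₂} e^{λ³C₃} ⋯ e^{λⁿCₙ} · e^{λⁿCₙ} ⋯ e^{λ³C₃} e^{λ²C₂} e^{λY/2} e^{λX/2}. Then for all n ≥ 2 and k > 0, ‖Ψ_{n+k}(λ) − Ψₙ(λ)‖ ≤ exp( λ(‖X‖ + ‖Y‖) + 2 Σ_{j=2}^{n} λ^j ‖C_j‖ ) · ( exp( 2 Σ_{j=n+1}^{n+k} λ^j ‖C_j‖ ) − 1 ). -/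

import Mathlib

/-!
`Ψ_{n+k}` and `Ψ_n` differ only in their central block: `Ψ_{n+k} - Ψ_n = M (R R̃ - 1) N`, where
`M`, `N` are the two outer halves of `Ψ_n` and `R`, `R̃` the products of the new factors
`e^{λ^j C_j}`, `n < j ≤ n + k`, in both orders. Every factor is measured by its distance from the
unit, `‖e^a - 1‖ ≤ e^{‖a‖} - 1`, and this distance is submultiplicative in the form
`1 + ‖u v - 1‖ ≤ (1 + ‖u - 1‖) (1 + ‖v - 1‖)`; so `1 + ‖M - 1‖`, `1 + ‖N - 1‖` and `1 + ‖R R̃ - 1‖`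
are bounded by exponentials of sums of norms, without ever using `‖1‖ = 1`.
-/

/-- The truncated symmetric (palindromic) Zassenhaus product
`Ψₙ(λ) = e^{λX/2} e^{λY/2} e^{λ²C₂} ⋯ e^{λⁿCₙ} · e^{λⁿCₙ} ⋯ e^{λ²C₂} e^{λY/2} e^{λX/2}`. -/
noncomputable def symmZassenhausProd {𝒜 : Type*} [NormedRing 𝒜] [NormedAlgebra ℂ 𝒜]
    (X Y : 𝒜) (C : ℕ → 𝒜) (n : ℕ) (l : ℝ) : 𝒜 :=
  NormedSpace.exp ((l / 2) • X) * NormedSpace.exp ((l / 2) • Y) *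
    ((List.range' 2 (n - 1)).map fun j => NormedSpace.exp (l ^ j • C j)).prod *
    (((List.range' 2 (n - 1)).map fun j => NormedSpace.exp (l ^ j • C j)).reverse).prod *
    NormedSpace.exp ((l / 2) • Y) * NormedSpace.exp ((l / 2) • X)

open NormedSpace

section NormedRing

variable {R : Type*} [NormedRing R]

theorem norm_mul_le_one_add_norm_sub_one_mul (u z : R) : ‖u * z‖ ≤ (1 + ‖u - 1‖) * ‖z‖ :=
  calc ‖u * z‖ = ‖(u - 1) * z + z‖ := by noncomm_ring
    _ ≤ ‖u - 1‖ * ‖z‖ + ‖z‖ := (norm_add_le _ _).trans (by gcongr; exact norm_mul_le _ _)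
    _ = (1 + ‖u - 1‖) * ‖z‖ := by ring

theorem norm_mul_le_mul_one_add_norm_sub_one (z v : R) : ‖z * v‖ ≤ ‖z‖ * (1 + ‖v - 1‖) :=
  calc ‖z * v‖ = ‖z * (v - 1) + z‖ := by noncomm_ring
    _ ≤ ‖z‖ * ‖v - 1‖ + ‖z‖ := (norm_add_le _ _).trans (by gcongr; exact norm_mul_le _ _)
    _ = ‖z‖ * (1 + ‖v - 1‖) := by ring

theorem norm_mul_mul_le_one_add_norm_sub_one (u z v : R) :
    ‖u * z * v‖ ≤ (1 + ‖u - 1‖) * ‖z‖ * (1 + ‖v - 1‖) :=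
  (norm_mul_le_mul_one_add_norm_sub_one _ _).trans <| by
    gcongr; exact norm_mul_le_one_add_norm_sub_one_mul _ _

theorem norm_mul_sub_one_le_exp_add_sub_one {u v : R} {a b : ℝ}
    (hu : ‖u - 1‖ ≤ Real.exp a - 1) (hv : ‖v - 1‖ ≤ Real.exp b - 1) :
    ‖u * v - 1‖ ≤ Real.exp (a + b) - 1 :=
  calc ‖u * v - 1‖ = ‖u * (v - 1) + (u - 1)‖ := by noncomm_ring
    _ ≤ (1 + ‖u - 1‖) * ‖v - 1‖ + ‖u - 1‖ :=
        (norm_add_le _ _).trans (by gcongr; exact norm_mul_le_one_add_norm_sub_one_mul _ _)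
    _ = (1 + ‖u - 1‖) * (1 + ‖v - 1‖) - 1 := by ring
    _ ≤ Real.exp a * Real.exp b - 1 := by gcongr <;> linarith
    _ = Real.exp (a + b) - 1 := by rw [Real.exp_add]

theorem norm_list_prod_map_sub_one_le_exp_sum {ι : Type*} (L : List ι) {f : ι → R} {a : ι → ℝ}
    (h : ∀ i ∈ L, ‖f i - 1‖ ≤ Real.exp (a i) - 1) :
    ‖(L.map f).prod - 1‖ ≤ Real.exp (L.map a).sum - 1 := by
  induction L with
  | nil => simp
  | cons i L ih =>
    simp only [List.map_cons, List.prod_cons, List.sum_cons]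
    exact norm_mul_sub_one_le_exp_add_sub_one (h i List.mem_cons_self)
      (ih fun j hj => h j (List.mem_cons_of_mem i hj))

theorem norm_list_prod_reverse_map_sub_one_le_exp_sum {ι : Type*} (L : List ι) {f : ι → R}
    {a : ι → ℝ} (h : ∀ i ∈ L, ‖f i - 1‖ ≤ Real.exp (a i) - 1) :
    ‖(L.map f).reverse.prod - 1‖ ≤ Real.exp (L.map a).sum - 1 := by
  rw [← List.map_reverse, ← List.sum_reverse, ← List.map_reverse]
  exact norm_list_prod_map_sub_one_le_exp_sum L.reverse fun i hi => h i (List.mem_reverse.mp hi)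

end NormedRing

section Exp

variable {𝔸 : Type*} [NormedRing 𝔸] [NormedAlgebra ℝ 𝔸] [CompleteSpace 𝔸]

theorem norm_exp_sub_one_le (x : 𝔸) : ‖exp x - 1‖ ≤ Real.exp ‖x‖ - 1 := by
  have hx := (hasSum_nat_add_iff' 1).mpr (exp_series_hasSum_exp' (𝕂 := ℝ) x)
  have hr := (hasSum_nat_add_iff' 1).mpr (exp_series_hasSum_exp' (𝕂 := ℝ) ‖x‖)
  simp only [Finset.sum_range_one, pow_zero, Nat.factorial_zero, Nat.cast_one, inv_one,
    one_smul] at hx hr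
  rw [← Real.exp_eq_exp_ℝ] at hr
  refine hx.norm_le_of_bounded hr fun n => ?_
  rw [norm_smul, Real.norm_of_nonneg (by positivity), smul_eq_mul]
  gcongr
  exact norm_pow_le' x n.succ_pos

end Exp

section Zassenhaus

variable {𝔸 : Type*} [NormedRing 𝔸] [NormedAlgebra ℝ 𝔸]

noncomputable def zassenhausFactors (C : ℕ → 𝔸) (l : ℝ) (a b : ℕ) : List 𝔸 :=
  (List.range' a (b + 1 - a)).map fun j => exp (l ^ j • C j)

theorem zassenhausFactors_append (C : ℕ → 𝔸) (l : ℝ) {a b c : ℕ} (hab : a ≤ b + 1)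
    (hbc : b ≤ c) :
    zassenhausFactors C l a b ++ zassenhausFactors C l (b + 1) c = zassenhausFactors C l a c := by
  unfold zassenhausFactors
  rw [← List.map_append, show c + 1 - a = (b + 1 - a) + (c + 1 - (b + 1)) by omega, ← List.range'_append_1,
    show a + (b + 1 - a) = b + 1 by omega]

theorem norm_prod_zassenhausFactors_sub_one_le [CompleteSpace 𝔸] (C : ℕ → 𝔸) {l : ℝ}
    (hl : 0 ≤ l) (a b : ℕ) :
    ‖(zassenhausFactors C l a b).prod - 1‖ ≤
        Real.exp (∑ j ∈ Finset.Icc a b, l ^ j * ‖C j‖) - 1 ∧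
      ‖(zassenhausFactors C l a b).reverse.prod - 1‖ ≤
        Real.exp (∑ j ∈ Finset.Icc a b, l ^ j * ‖C j‖) - 1 := by
  have hC : ∀ j ∈ List.range' a (b + 1 - a),
      ‖exp (l ^ j • C j) - 1‖ ≤ Real.exp (l ^ j * ‖C j‖) - 1 := fun j _ => by
    simpa only [norm_smul_of_nonneg (pow_nonneg hl j)] using norm_exp_sub_one_le (l ^ j • C j)
  have hsum : ∑ j ∈ Finset.Icc a b, l ^ j * ‖C j‖ =
      ((List.range' a (b + 1 - a)).map fun j => l ^ j * ‖C j‖).sum := by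
    rw [Nat.Icc_eq_range']; rfl
  rw [hsum]
  exact ⟨norm_list_prod_map_sub_one_le_exp_sum _ hC,
    norm_list_prod_reverse_map_sub_one_le_exp_sum _ hC⟩

end Zassenhaus

theorem symmZassenhausProd_add_sub {𝒜 : Type*} [NormedRing 𝒜] [NormedAlgebra ℂ 𝒜] (X Y : 𝒜)
    (C : ℕ → 𝒜) (l : ℝ) {n : ℕ} (hn : 1 ≤ n) (k : ℕ) :
    symmZassenhausProd X Y C (n + k) l - symmZassenhausProd X Y C n l =
      (exp ((l / 2) • X) * exp ((l / 2) • Y) * (zassenhausFactors C l 2 n).prod) *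
        ((zassenhausFactors C l (n + 1) (n + k)).prod *
          (zassenhausFactors C l (n + 1) (n + k)).reverse.prod - 1) *
        ((zassenhausFactors C l 2 n).reverse.prod * exp ((l / 2) • Y) * exp ((l / 2) • X)) := by
  have hΨ (m : ℕ) : symmZassenhausProd X Y C m l =
      exp ((l / 2) • X) * exp ((l / 2) • Y) * (zassenhausFactors C l 2 m).prod *
        (zassenhausFactors C l 2 m).reverse.prod * exp ((l / 2) • Y) * exp ((l / 2) • X) := by
    rw [zassenhausFactors, Nat.add_sub_add_right m 1 1]; rfl
  rw [hΨ, hΨ, ← zassenhausFactors_append C l (by omega : 2 ≤ n + 1) (by omega : n ≤ n + k)]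
  simp only [List.prod_append, List.reverse_append]
  noncomm_ring

theorem norm_symmZassenhausProd_sub_le {𝒜 : Type*} [NormedRing 𝒜] [NormedAlgebra ℂ 𝒜]
    [CompleteSpace 𝒜] (X Y : 𝒜) (C : ℕ → 𝒜) (l : ℝ) (hl : 0 ≤ l) :
    ∀ n : ℕ, 2 ≤ n → ∀ k : ℕ, 0 < k →
      ‖symmZassenhausProd X Y C (n + k) l - symmZassenhausProd X Y C n l‖ ≤
        Real.exp (l * (‖X‖ + ‖Y‖) + 2 * ∑ j ∈ Finset.Icc 2 n, l ^ j * ‖C j‖) *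
          (Real.exp (2 * ∑ j ∈ Finset.Icc (n + 1) (n + k), l ^ j * ‖C j‖) - 1) := by
  intro n hn k _
  set S := ∑ j ∈ Finset.Icc 2 n, l ^ j * ‖C j‖
  set T := ∑ j ∈ Finset.Icc (n + 1) (n + k), l ^ j * ‖C j‖
  have hexp (Z : 𝒜) : ‖exp ((l / 2) • Z) - 1‖ ≤ Real.exp (l / 2 * ‖Z‖) - 1 := by
    simpa only [norm_smul_of_nonneg (by positivity : 0 ≤ l / 2)] using
      norm_exp_sub_one_le ((l / 2) • Z)
  obtain ⟨hP, hP'⟩ := norm_prod_zassenhausFactors_sub_one_le C hl 2 n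
  obtain ⟨hR, hR'⟩ := norm_prod_zassenhausFactors_sub_one_le C hl (n + 1) (n + k)
  have hM := norm_mul_sub_one_le_exp_add_sub_one
    (norm_mul_sub_one_le_exp_add_sub_one (hexp X) (hexp Y)) hP
  have hN := norm_mul_sub_one_le_exp_add_sub_one
    (norm_mul_sub_one_le_exp_add_sub_one hP' (hexp Y)) (hexp X)
  have hZ := norm_mul_sub_one_le_exp_add_sub_one hR hR'
  rw [symmZassenhausProd_add_sub X Y C l (by omega) k]
  calc _ ≤ _ := norm_mul_mul_le_one_add_norm_sub_one _ _ _
    _ ≤ Real.exp (l / 2 * ‖X‖ + l / 2 * ‖Y‖ + S) * (Real.exp (T + T) - 1) *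
          Real.exp (S + l / 2 * ‖Y‖ + l / 2 * ‖X‖) := by
        have hZ₀ : 0 ≤ Real.exp (T + T) - 1 := (norm_nonneg _).trans hZ
        gcongr <;> linarith
    _ = _ := by rw [mul_right_comm, ← Real.exp_add]; ring_nf
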